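/- arXiv:1403.8132 — 2 statements merged into one kernel-verified Lean document; each statement's English description precedes it below -/
import Mathlib

section
/- The braided Thompson group Vbr is perfect, i.e., Vbr equals its own commutator subgroup [Vbr,Vbr]. -/
namespace BrThompson

/-- Generators of the braided Thompson group `Vbr`: `x i` for `i ≥ 0`,
and `s i` (= σ_i), `t i` (= τ_i) for `i ≥ 1`. -/
inductive VbrGen : Type
  | x : ℕ → VbrGen
  | s : (i : ℕ) → 1 ≤ i → VbrGen
  | t : (i : ℕ) → 1 ≤ i → VbrGen

/-- The generator `x i` as an element of the free group. -/
def vxg (i : ℕ) : FreeGroup VbrGen := FreeGroup.of (VbrGen.x i)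

/-- The generator `σ i` as an element of the free group (junk value `1` for `i = 0`). -/
def sg (i : ℕ) : FreeGroup VbrGen :=
  if h : 1 ≤ i then FreeGroup.of (VbrGen.s i h) else 1

/-- The generator `τ i` as an element of the free group (junk value `1` for `i = 0`). -/
def tg (i : ℕ) : FreeGroup VbrGen :=
  if h : 1 ≤ i then FreeGroup.of (VbrGen.t i h) else 1

/-- The defining relations of `Vbr`, each written as a word set equal to `1`. -/
inductive IsVbrRel : FreeGroup VbrGen → Prop
  | relA (i j : ℕ) (h : i < j) :
      IsVbrRel (vxg j * vxg i * (vxg i * vxg (j + 1))⁻¹)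
  | relb1 (i j : ℕ) (h0 : 1 ≤ i) (h1 : i + 2 ≤ j) :
      IsVbrRel (sg i * sg j * (sg j * sg i)⁻¹)
  | relb2 (i : ℕ) (h0 : 1 ≤ i) :
      IsVbrRel (sg i * sg (i + 1) * sg i * (sg (i + 1) * sg i * sg (i + 1))⁻¹)
  | relb3 (i j : ℕ) (h0 : 1 ≤ i) (h1 : i + 2 ≤ j) :
      IsVbrRel (sg i * tg j * (tg j * sg i)⁻¹)
  | relb4 (i : ℕ) (h0 : 1 ≤ i) :
      IsVbrRel (sg i * tg (i + 1) * sg i * (tg (i + 1) * sg i * tg (i + 1))⁻¹)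
  | relc1 (i j : ℕ) (h0 : 1 ≤ i) (h1 : i < j) :
      IsVbrRel (sg i * vxg j * (vxg j * sg i)⁻¹)
  | relc2 (i : ℕ) (h0 : 1 ≤ i) :
      IsVbrRel (sg i * vxg i * (vxg (i - 1) * sg (i + 1) * sg i)⁻¹)
  | relc3 (i j : ℕ) (h0 : 1 ≤ j) (h1 : j + 2 ≤ i) :
      IsVbrRel (sg i * vxg j * (vxg j * sg (i + 1))⁻¹)
  | relc4 (i : ℕ) (h0 : 1 ≤ i) :
      IsVbrRel (sg (i + 1) * vxg i * (vxg (i + 1) * sg (i + 1) * sg (i + 2))⁻¹)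
  | reld1 (i j : ℕ) (h0 : 1 ≤ j) (h1 : j + 2 ≤ i) :
      IsVbrRel (tg i * vxg j * (vxg j * tg (i + 1))⁻¹)
  | reld2 (i : ℕ) (h0 : 1 ≤ i) :
      IsVbrRel (tg i * vxg (i - 1) * (sg i * tg (i + 1))⁻¹)
  | reld3 (i : ℕ) (h0 : 1 ≤ i) :
      IsVbrRel (tg i * (vxg (i - 1) * tg (i + 1) * sg i)⁻¹)

def vbrRels : Set (FreeGroup VbrGen) := {r | IsVbrRel r}

/-- The braided Thompson group `Vbr` of Brin and Dehornoy. -/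
abbrev Vbr : Type := PresentedGroup vbrRels

/-- The generator `τ i` of `Vbr` (junk value `1` for `i = 0`). -/
def tau (i : ℕ) : Vbr :=
  if h : 1 ≤ i then PresentedGroup.of (VbrGen.t i h) else 1

/-- The composite map from the free group to the abelianization of `Vbr`. -/
def phi : FreeGroup VbrGen →* Abelianization Vbr :=
  Abelianization.of.comp (PresentedGroup.mk vbrRels)

lemma phi_rel {r : FreeGroup VbrGen} (hr : IsVbrRel r) : phi r = 1 := by
  have h1 : PresentedGroup.mk vbrRels r = 1 :=
    (QuotientGroup.eq_one_iff r).mpr (Subgroup.subset_normalClosure hr)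
  simp [phi, h1]

local notation "X" => fun i => phi (vxg i)
local notation "S" => fun i => phi (sg i)
local notation "T" => fun i => phi (tg i)

lemma phi_gen_eq_one : ∀ g : VbrGen, phi (FreeGroup.of g) = 1 := by
  -- abelianized relations
  have hd2 : ∀ j : ℕ, T (j+1) * X j = S (j+1) * T (j+2) := by
    intro j
    have h := phi_rel (IsVbrRel.reld2 (j+1) (by omega))
    simp only [map_mul, map_inv, mul_inv_eq_one, Nat.add_sub_cancel] at h
    exact h
  have hd3 : ∀ j : ℕ, T (j+1) = X j * T (j+2) * S (j+1) := by
    intro j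
    have h := phi_rel (IsVbrRel.reld3 (j+1) (by omega))
    simp only [map_mul, map_inv, mul_inv_eq_one, Nat.add_sub_cancel] at h
    exact h
  have hc2 : ∀ i : ℕ, 1 ≤ i → X i = X (i-1) * S (i+1) := by
    intro i hi
    have h := phi_rel (IsVbrRel.relc2 i hi)
    simp only [map_mul, map_inv, mul_inv_eq_one] at h
    apply mul_left_cancel (a := S i)
    rw [h]
    simp [mul_comm, mul_left_comm, mul_assoc]
  have hXsucc : ∀ j : ℕ, 1 ≤ j → X j = X (j+1) := by
    intro j hj
    have h := phi_rel (IsVbrRel.relA 0 j hj)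
    simp only [map_mul, map_inv, mul_inv_eq_one] at h
    exact mul_left_cancel ((mul_comm (X 0) (X j)).trans h)
  have hX1 : ∀ j : ℕ, 1 ≤ j → X j = X 1 := by
    intro j hj
    induction j with
    | zero => omega
    | succ n ih =>
      rcases Nat.eq_or_lt_of_le hj with h | h
      · rw [← h]
      · rw [← hXsucc n (by omega)]; exact ih (by omega)
  have hS3 : S 3 = 1 := by
    have h1 := hc2 2 (by norm_num)
    norm_num at h1
    have h2 : X 2 = X 1 := hX1 2 (by norm_num)
    apply mul_left_cancel (a := X 1)
    rw [mul_one, ← h1]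
    exact h2
  have hb2 : ∀ i : ℕ, 1 ≤ i → S i = S (i+1) := by
    intro i hi
    have h := phi_rel (IsVbrRel.relb2 i hi)
    simp only [map_mul, map_inv, mul_inv_eq_one] at h
    have key : S i * S (i+1) * S i = S i * S (i+1) * S (i+1) := by
      rw [h]; simp [mul_comm, mul_left_comm, mul_assoc]
    exact mul_left_cancel key
  have hchain : ∀ n : ℕ, S (n+1) = S 1 := by
    intro n
    induction n with
    | zero => rfl
    | succ m ih => rw [← hb2 (m+1) (by omega)]; exact ih
  have hS : ∀ i : ℕ, 1 ≤ i → S i = 1 := by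
    intro i hi
    obtain ⟨n, rfl⟩ : ∃ n, i = n + 1 := ⟨i - 1, by omega⟩
    rw [hchain n, ← hchain 2]
    exact hS3
  have hb4 : ∀ i : ℕ, 1 ≤ i → S i = T (i+1) := by
    intro i hi
    have h := phi_rel (IsVbrRel.relb4 i hi)
    simp only [map_mul, map_inv, mul_inv_eq_one] at h
    have key : S i * T (i+1) * S i = S i * T (i+1) * T (i+1) := by
      rw [h]; simp [mul_comm, mul_left_comm, mul_assoc]
    exact mul_left_cancel key
  have hT : ∀ j : ℕ, 2 ≤ j → T j = 1 := by
    intro j hj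
    obtain ⟨n, rfl⟩ : ∃ n, j = n + 2 := ⟨j - 2, by omega⟩
    rw [← hb4 (n+1) (by omega)]
    exact hS (n+1) (by omega)
  have hX1one : X 1 = 1 := by
    have h := hd2 1
    rwa [hT 2 (by norm_num), hS 2 (by norm_num), hT 3 (by norm_num), one_mul, one_mul] at h
  have hX : ∀ j : ℕ, X j = 1 := by
    intro j
    rcases Nat.eq_zero_or_pos j with h | h
    · subst h
      have h1 := hc2 1 (by norm_num)
      rw [hX1one, hS 2 (by norm_num), mul_one] at h1
      exact h1.symm
    · rw [hX1 j h]; exact hX1one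
  have hT1 : ∀ i : ℕ, 1 ≤ i → T i = 1 := by
    intro i hi
    rcases Nat.lt_or_ge i 2 with h' | h'
    · obtain rfl : i = 1 := by omega
      have h := hd3 0
      norm_num [hX 0, hT 2 (by norm_num), hS 1 (by norm_num)] at h
      exact h
    · exact hT i h'
  intro g
  cases g with
  | x i => exact hX i
  | s i h => simpa [sg, h] using hS i h
  | t i h => simpa [tg, h] using hT1 i h

/-- The braided Thompson group `Vbr` is perfect. -/
theorem vbr_perfect : commutator Vbr = ⊤ := by
  have hphi : phi = 1 := FreeGroup.ext_hom _ _ fun g => by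
    simpa using phi_gen_eq_one g
  rw [eq_top_iff]
  intro x _
  have h1 : Abelianization.of x = 1 := by
    obtain ⟨w, rfl⟩ := PresentedGroup.mk_surjective vbrRels x
    have : phi w = 1 := by rw [hphi]; rfl
    simpa [phi] using this
  exact (QuotientGroup.eq_one_iff x).mp h1

end BrThompson
end

section
/- The commutator subgroup [Fbr,Fbr] of the braided Thompson group Fbr is perfect, i.e., the commutator subgroup of [Fbr,Fbr] equals [Fbr,Fbr]. -/
/-!
Let `Q := Fbr ⧸ ⁅Fbr', Fbr'⁆`; the theorem amounts to `Q` being abelian. In a metabelian group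
the two defining relations of Thompson's group `F` between `x 0` and `x 1` already force them to
commute. Once they do, relation (A) identifies all `x m` with `m ≥ 1`, and then (C) and (D) make
every `α i j` and `β i j` trivial or equal to `α 1 2`, `β 1 3` or `β 1 3 * α 1 2`. So `Q` is
generated by `x 0`, `x 1`, `α 1 2` and `β 1 3`, and these commute by (B7) and (D).
-/

namespace BrThompson

/-- Generators of the braided Thompson group `Fbr`: `x i` for `i ≥ 0`,
and `a i j`, `b i j` (the α- and β-generators) for `1 ≤ i < j`. -/
inductive FbrGen : Type
  | x : ℕ → FbrGen
  | a : (i j : ℕ) → 1 ≤ i → i < j → FbrGen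
  | b : (i j : ℕ) → 1 ≤ i → i < j → FbrGen

/-- The generator `x i` as an element of the free group. -/
def xg (i : ℕ) : FreeGroup FbrGen := FreeGroup.of (FbrGen.x i)

/-- The generator `α i j` as an element of the free group (junk value `1` for invalid indices). -/
def ag (i j : ℕ) : FreeGroup FbrGen :=
  if h : 1 ≤ i ∧ i < j then FreeGroup.of (FbrGen.a i j h.1 h.2) else 1

/-- The generator `β i j` as an element of the free group (junk value `1` for invalid indices). -/
def bg (i j : ℕ) : FreeGroup FbrGen :=
  if h : 1 ≤ i ∧ i < j then FreeGroup.of (FbrGen.b i j h.1 h.2) else 1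

/-- The defining relations of `Fbr`, each written as a word that is set equal to `1`,
namely `u * v⁻¹` for a relation `u = v`. -/
inductive IsFbrRel : FreeGroup FbrGen → Prop
  | relA (i j : ℕ) (h : i < j) :
      IsFbrRel (xg j * xg i * (xg i * xg (j + 1))⁻¹)
  | relB1a (r s i j : ℕ) (h0 : 1 ≤ r) (h1 : r < s) (h2 : s < i) (h3 : i < j) :
      IsFbrRel ((ag r s)⁻¹ * ag i j * ag r s * (ag i j)⁻¹)
  | relB1b (i r s j : ℕ) (h0 : 1 ≤ i) (h1 : i < r) (h2 : r < s) (h3 : s < j) :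
      IsFbrRel ((ag r s)⁻¹ * ag i j * ag r s * (ag i j)⁻¹)
  | relB2 (r i j : ℕ) (h0 : 1 ≤ r) (h1 : r < i) (h2 : i < j) :
      IsFbrRel ((ag r i)⁻¹ * ag i j * ag r i * (ag r j * ag i j * (ag r j)⁻¹)⁻¹)
  | relB3 (i s j : ℕ) (h0 : 1 ≤ i) (h1 : i < s) (h2 : s < j) :
      IsFbrRel ((ag i s)⁻¹ * ag i j * ag i s *
        (ag i j * ag s j * ag i j * (ag i j * ag s j)⁻¹)⁻¹)
  | relB4 (r i s j : ℕ) (h0 : 1 ≤ r) (h1 : r < i) (h2 : i < s) (h3 : s < j) :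
      IsFbrRel ((ag r s)⁻¹ * ag i j * ag r s *
        (ag r j * ag s j * (ag r j)⁻¹ * (ag s j)⁻¹ * ag i j *
          (ag r j * ag s j * (ag r j)⁻¹ * (ag s j)⁻¹)⁻¹)⁻¹)
  | relB5a (r s i j : ℕ) (h0 : 1 ≤ r) (h1 : r < s) (h2 : s < i) (h3 : i < j) :
      IsFbrRel ((ag r s)⁻¹ * bg i j * ag r s * (bg i j)⁻¹)
  | relB5b (i r s j : ℕ) (h0 : 1 ≤ i) (h1 : i < r) (h2 : r < s) (h3 : s < j) :
      IsFbrRel ((ag r s)⁻¹ * bg i j * ag r s * (bg i j)⁻¹)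
  | relB6 (r i j : ℕ) (h0 : 1 ≤ r) (h1 : r < i) (h2 : i < j) :
      IsFbrRel ((ag r i)⁻¹ * bg i j * ag r i * (bg r j * bg i j * (bg r j)⁻¹)⁻¹)
  | relB7 (i s j : ℕ) (h0 : 1 ≤ i) (h1 : i < s) (h2 : s < j) :
      IsFbrRel ((ag i s)⁻¹ * bg i j * ag i s *
        (bg i j * bg s j * bg i j * (bg i j * bg s j)⁻¹)⁻¹)
  | relB8 (r i s j : ℕ) (h0 : 1 ≤ r) (h1 : r < i) (h2 : i < s) (h3 : s < j) :
      IsFbrRel ((ag r s)⁻¹ * bg i j * ag r s *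
        (bg r j * bg s j * (bg r j)⁻¹ * (bg s j)⁻¹ * bg i j *
          (bg r j * bg s j * (bg r j)⁻¹ * (bg s j)⁻¹)⁻¹)⁻¹)
  | relC (i j : ℕ) (h0 : 1 ≤ i) (h1 : i < j) :
      IsFbrRel (bg i j * (bg i (j + 1) * ag i j)⁻¹)
  | relD1 (k i j : ℕ) (h0 : 1 ≤ k) (h1 : k < i) (h2 : i < j) :
      IsFbrRel (ag i j * xg (k - 1) * (xg (k - 1) * ag (i + 1) (j + 1))⁻¹)
  | relD2 (i j : ℕ) (h0 : 1 ≤ i) (h1 : i < j) :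
      IsFbrRel (ag i j * xg (i - 1) * (xg (i - 1) * ag (i + 1) (j + 1) * ag i (j + 1))⁻¹)
  | relD3 (i k j : ℕ) (h0 : 1 ≤ i) (h1 : i < k) (h2 : k < j) :
      IsFbrRel (ag i j * xg (k - 1) * (xg (k - 1) * ag i (j + 1))⁻¹)
  | relD4 (i j : ℕ) (h0 : 1 ≤ i) (h1 : i < j) :
      IsFbrRel (ag i j * xg (j - 1) * (xg (j - 1) * ag i (j + 1) * ag i j)⁻¹)
  | relD5 (i j k : ℕ) (h0 : 1 ≤ i) (h1 : i < j) (h2 : j < k) :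
      IsFbrRel (ag i j * xg (k - 1) * (xg (k - 1) * ag i j)⁻¹)
  | relD6 (k i j : ℕ) (h0 : 1 ≤ k) (h1 : k < i) (h2 : i < j) :
      IsFbrRel (bg i j * xg (k - 1) * (xg (k - 1) * bg (i + 1) (j + 1))⁻¹)
  | relD7 (i j : ℕ) (h0 : 1 ≤ i) (h1 : i < j) :
      IsFbrRel (bg i j * xg (i - 1) * (xg (i - 1) * bg (i + 1) (j + 1) * bg i (j + 1))⁻¹)
  | relD8 (i k j : ℕ) (h0 : 1 ≤ i) (h1 : i < k) (h2 : k < j) :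
      IsFbrRel (bg i j * xg (k - 1) * (xg (k - 1) * bg i (j + 1))⁻¹)
  | relD9 (i j k : ℕ) (h0 : 1 ≤ i) (h1 : i < j) (h2 : j < k) :
      IsFbrRel (bg i j * xg (k - 1) * (xg (k - 1) * bg i j)⁻¹)

def fbrRels : Set (FreeGroup FbrGen) := {r | IsFbrRel r}

/-- The braided Thompson group `Fbr` of Brady–Burillo–Cleary–Stein. -/
abbrev Fbr : Type := PresentedGroup fbrRels

/-- The generator `x i` of `Fbr`. -/
def x (i : ℕ) : Fbr := PresentedGroup.of (FbrGen.x i)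

/-- The generator `α i j` of `Fbr` (junk value `1` for invalid indices). -/
def al (i j : ℕ) : Fbr :=
  if h : 1 ≤ i ∧ i < j then PresentedGroup.of (FbrGen.a i j h.1 h.2) else 1

/-- The generator `β i j` of `Fbr` (junk value `1` for invalid indices). -/
def be (i j : ℕ) : Fbr :=
  if h : 1 ≤ i ∧ i < j then PresentedGroup.of (FbrGen.b i j h.1 h.2) else 1

open scoped commutatorElement

section Metabelian

variable {G : Type*} [Group G]

/-- Write `n := t⁻¹ * y * t * y⁻¹` additively in the abelian group `G'`, on which conjugation by `t`
and `y` acts through commuting operators `T` and `Y`. The two relations say `Y n = T n + n` and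
`Y (T n + n) = T (T n + n) + n`; together they force `T n = 0`, so `n = 0`. -/
lemma commute_of_thompson_relations (hG : ∀ a b c d : G, ⁅⁅a, b⁆, ⁅c, d⁆⁆ = 1) {t y : G}
    (h₃ : t⁻¹ * (t⁻¹ * y * t) * t = y⁻¹ * (t⁻¹ * y * t) * y)
    (h₄ : t⁻¹ * (t⁻¹ * (t⁻¹ * y * t) * t) * t = y⁻¹ * (t⁻¹ * (t⁻¹ * y * t) * t) * y) :
    Commute t y := by
  obtain ⟨n, hn⟩ : ∃ n, n = t⁻¹ * y * t * y⁻¹ := ⟨_, rfl⟩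
  have hcn : ⁅y, t⁆⁻¹ * n * ⁅y, t⁆ = n := by
    have h := commutatorElement_eq_one_iff_commute.mp (hG y t t⁻¹ y)
    rw [commutatorElement_def t⁻¹, inv_inv, ← hn] at h
    rw [mul_assoc, ← h.eq, inv_mul_cancel_left]
  have hY : y⁻¹ * n * y = t⁻¹ * n * t * n := by
    calc y⁻¹ * n * y = y⁻¹ * (t⁻¹ * y * t) * y * y⁻¹ := by rw [hn]; group
      _ = t⁻¹ * (t⁻¹ * y * t) * t * y⁻¹ := by rw [h₃]
      _ = t⁻¹ * n * t * n := by rw [hn]; group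
  have hYT : y⁻¹ * (t⁻¹ * n * t) * y = t⁻¹ * (y⁻¹ * n * y) * t := by
    calc y⁻¹ * (t⁻¹ * n * t) * y = (t * y)⁻¹ * n * (t * y) := by group
      _ = (t * y)⁻¹ * (⁅y, t⁆⁻¹ * n * ⁅y, t⁆) * (t * y) := by rw [hcn]
      _ = t⁻¹ * (y⁻¹ * n * y) * t := by rw [commutatorElement_def]; group
  have hY' : t⁻¹ * (t⁻¹ * n * t * n) * t * n = y⁻¹ * (t⁻¹ * n * t * n) * y := by
    calc t⁻¹ * (t⁻¹ * n * t * n) * t * n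
        = t⁻¹ * (t⁻¹ * (t⁻¹ * y * t) * t) * t * y⁻¹ := by rw [hn]; group
      _ = y⁻¹ * (t⁻¹ * (t⁻¹ * y * t) * t) * y * y⁻¹ := by rw [h₄]
      _ = y⁻¹ * (t⁻¹ * n * t * n) * y := by rw [hn]; group
  have hTn : t⁻¹ * n * t = 1 := by
    refine left_eq_mul.mp
      (mul_right_cancel (?_ : _ = t⁻¹ * (t⁻¹ * n * t * n) * t * (t⁻¹ * n * t) * n))
    calc t⁻¹ * (t⁻¹ * n * t * n) * t * n
        = y⁻¹ * (t⁻¹ * n * t) * y * (y⁻¹ * n * y) := by rw [hY']; group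
      _ = t⁻¹ * (t⁻¹ * n * t * n) * t * (t⁻¹ * n * t * n) := by rw [hYT, hY]
      _ = t⁻¹ * (t⁻¹ * n * t * n) * t * (t⁻¹ * n * t) * n := by group
  have hn1 : n = 1 := by
    simpa [mul_assoc] using congrArg (fun g => t * g * t⁻¹) hTn
  rw [hn, mul_inv_eq_one, mul_assoc, inv_mul_eq_iff_eq_mul] at hn1
  exact hn1.symm

lemma commutatorElement_commutatorElement_eq_one
    (a b c d : G ⧸ ⁅commutator G, commutator G⁆) : ⁅⁅a, b⁆, ⁅c, d⁆⁆ = 1 := by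
  obtain ⟨a, rfl⟩ := QuotientGroup.mk'_surjective _ a
  obtain ⟨b, rfl⟩ := QuotientGroup.mk'_surjective _ b
  obtain ⟨c, rfl⟩ := QuotientGroup.mk'_surjective _ c
  obtain ⟨d, rfl⟩ := QuotientGroup.mk'_surjective _ d
  rw [← map_commutatorElement, ← map_commutatorElement, ← map_commutatorElement,
    QuotientGroup.mk'_apply, QuotientGroup.eq_one_iff]
  have hmem (g h : G) : ⁅g, h⁆ ∈ commutator G :=
    Subgroup.commutator_mem_commutator (Subgroup.mem_top g) (Subgroup.mem_top h)
  exact Subgroup.commutator_mem_commutator (hmem a b) (hmem c d)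

end Metabelian

@[simp]
lemma mk_xg (i : ℕ) : PresentedGroup.mk fbrRels (xg i) = x i := rfl

@[simp]
lemma mk_ag (i j : ℕ) : PresentedGroup.mk fbrRels (ag i j) = al i j := by
  unfold ag al
  split_ifs <;> simp [PresentedGroup.of]

@[simp]
lemma mk_bg (i j : ℕ) : PresentedGroup.mk fbrRels (bg i j) = be i j := by
  unfold bg be
  split_ifs <;> simp [PresentedGroup.of]

lemma of_a_eq_al {i j : ℕ} (h₁ : 1 ≤ i) (h₂ : i < j) :
    PresentedGroup.of (FbrGen.a i j h₁ h₂) = al i j := by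
  rw [al, dif_pos ⟨h₁, h₂⟩]

lemma of_b_eq_be {i j : ℕ} (h₁ : 1 ≤ i) (h₂ : i < j) :
    PresentedGroup.of (FbrGen.b i j h₁ h₂) = be i j := by
  rw [be, dif_pos ⟨h₁, h₂⟩]

lemma mk_eq_mk_of_isFbrRel {u v : FreeGroup FbrGen} (h : IsFbrRel (u * v⁻¹)) :
    PresentedGroup.mk fbrRels u = PresentedGroup.mk fbrRels v :=
  PresentedGroup.mk_eq_mk_of_mul_inv_mem h

lemma x_mul_x {i j : ℕ} (h : i < j) : x j * x i = x i * x (j + 1) := by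
  simpa using mk_eq_mk_of_isFbrRel (.relA i j h)

lemma be_eq_be_mul_al {i j : ℕ} (h₁ : 1 ≤ i) (h₂ : i < j) : be i j = be i (j + 1) * al i j := by
  simpa using mk_eq_mk_of_isFbrRel (.relC i j h₁ h₂)

lemma x_inv_mul_x_mul_x {i j : ℕ} (h : i < j) : (x i)⁻¹ * x j * x i = x (j + 1) := by
  rw [mul_assoc, x_mul_x h, inv_mul_cancel_left]

section CommutingXZeroXOne

variable {G : Type*} [Group G] {f : Fbr →* G}

lemma map_x_eq_map_x_one (hx : Commute (f (x 0)) (f (x 1))) {m : ℕ} (hm : 1 ≤ m) :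
    f (x m) = f (x 1) := by
  induction m, hm using Nat.le_induction with
  | base => rfl
  | succ m hm ih =>
    have h := congrArg f (x_mul_x (Nat.zero_lt_of_lt hm))
    rw [map_mul, map_mul, ih] at h
    exact mul_left_cancel (h.symm.trans hx.eq.symm)

lemma map_al_eq_one (hx : Commute (f (x 0)) (f (x 1))) {i j : ℕ} (hi : 1 ≤ i) (hij : i + 2 ≤ j) :
    f (al i j) = 1 := by
  have h₃ := congrArg f (mk_eq_mk_of_isFbrRel (.relD3 i (i + 1) j hi (by omega) (by omega)))
  have h₄ := congrArg f (mk_eq_mk_of_isFbrRel (.relD4 i j hi (by omega)))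
  simp only [map_mul, mk_xg, mk_ag, Nat.add_sub_cancel] at h₃ h₄
  rw [map_x_eq_map_x_one hx hi] at h₃
  rw [map_x_eq_map_x_one hx (by omega : 1 ≤ j - 1)] at h₄
  exact left_eq_mul.mp (h₃.symm.trans h₄)

lemma commute_map_al_succ_map_x_one (hx : Commute (f (x 0)) (f (x 1))) {i : ℕ} (hi : 1 ≤ i) :
    Commute (f (al i (i + 1))) (f (x 1)) := by
  have h := congrArg f (mk_eq_mk_of_isFbrRel (.relD4 i (i + 1) hi (by omega)))
  simp only [map_mul, mk_xg, mk_ag, Nat.add_sub_cancel] at h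
  rwa [map_al_eq_one hx (j := i + 1 + 1) hi (by omega), mul_one, map_x_eq_map_x_one hx hi] at h

lemma map_al_succ_succ_of_two_le (hx : Commute (f (x 0)) (f (x 1))) {i : ℕ} (hi : 2 ≤ i) :
    f (al (i + 1) (i + 2)) = f (al i (i + 1)) := by
  have h := congrArg f (mk_eq_mk_of_isFbrRel (.relD2 i (i + 1) (by omega) (by omega)))
  simp only [map_mul, mk_xg, mk_ag] at h
  rw [map_al_eq_one hx (i := i) (j := i + 1 + 1) (by omega) (by omega), mul_one,
    map_x_eq_map_x_one hx (by omega),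
    (commute_map_al_succ_map_x_one hx (by omega)).eq] at h
  exact (mul_left_cancel h).symm

lemma map_al_two_three (hx : Commute (f (x 0)) (f (x 1))) : f (al 2 3) = f (al 1 2) := by
  have h₂ := congrArg f (mk_eq_mk_of_isFbrRel (.relD2 1 2 le_rfl one_lt_two))
  have h₁ := congrArg f (mk_eq_mk_of_isFbrRel (.relD1 1 2 3 le_rfl one_lt_two (by norm_num)))
  simp only [map_mul, mk_xg, mk_ag, Nat.sub_self, Nat.reduceAdd] at h₁ h₂
  rw [map_al_eq_one hx le_rfl le_rfl, mul_one] at h₂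
  rw [map_al_succ_succ_of_two_le hx (i := 2) le_rfl] at h₁
  exact mul_right_cancel (h₁.trans h₂.symm)

lemma map_al_succ (hx : Commute (f (x 0)) (f (x 1))) {i : ℕ} (hi : 1 ≤ i) :
    f (al i (i + 1)) = f (al 1 2) := by
  induction i, hi using Nat.le_induction with
  | base => rfl
  | succ i hi ih =>
    obtain rfl | hi := hi.eq_or_lt
    · exact map_al_two_three hx
    · exact (map_al_succ_succ_of_two_le hx hi).trans ih

lemma commute_map_x_zero_map_al (hx : Commute (f (x 0)) (f (x 1))) :
    Commute (f (x 0)) (f (al 1 2)) := by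
  have h := congrArg f (mk_eq_mk_of_isFbrRel (.relD2 1 2 le_rfl one_lt_two))
  simp only [map_mul, mk_xg, mk_ag, Nat.sub_self, Nat.reduceAdd] at h
  rw [map_al_eq_one hx le_rfl le_rfl, mul_one, map_al_two_three hx] at h
  exact h.symm

lemma map_be_eq_map_be_add_two (hx : Commute (f (x 0)) (f (x 1))) {i j : ℕ} (hi : 1 ≤ i)
    (hij : i + 2 ≤ j) : f (be i j) = f (be i (i + 2)) := by
  induction j, hij using Nat.le_induction with
  | base => rfl
  | succ j hj ih =>
    rw [← ih, be_eq_be_mul_al hi (by omega : i < j), map_mul, map_al_eq_one hx hi hj, mul_one]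

lemma map_be_add_three_eq_one (hx : Commute (f (x 0)) (f (x 1))) {i : ℕ} (hi : 2 ≤ i) :
    f (be (i + 1) (i + 3)) = 1 := by
  have h₇ := congrArg f (mk_eq_mk_of_isFbrRel (.relD7 i (i + 2) (by omega) (by omega)))
  have h₈ := congrArg f (mk_eq_mk_of_isFbrRel (.relD8 i (i + 1) (i + 2) (by omega) (by omega)
    (by omega)))
  simp only [map_mul, mk_xg, mk_bg, Nat.add_sub_cancel] at h₇ h₈
  rw [map_x_eq_map_x_one hx (by omega),
    map_be_eq_map_be_add_two hx (i := i) (j := i + 2 + 1) (by omega) (by omega)] at h₇ h₈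
  have h : f (x 1) * (f (be (i + 1) (i + 3)) * f (be i (i + 2))) =
      f (x 1) * f (be i (i + 2)) := by
    rw [← mul_assoc, ← h₇, h₈]
  exact mul_eq_right.mp (mul_left_cancel h)

lemma map_be_add_two_eq_one (hx : Commute (f (x 0)) (f (x 1))) {i : ℕ} (hi : 2 ≤ i) :
    f (be i (i + 2)) = 1 := by
  obtain rfl | hi := hi.eq_or_lt
  · have h := congrArg f (mk_eq_mk_of_isFbrRel (.relD6 1 2 4 le_rfl one_lt_two (by norm_num)))
    simp only [map_mul, mk_xg, mk_bg, Nat.sub_self, Nat.reduceAdd] at h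
    rw [map_be_add_three_eq_one hx (i := 2) le_rfl, mul_one] at h
    exact mul_eq_right.mp h
  · obtain ⟨i, rfl⟩ : ∃ m, i = m + 1 := ⟨i - 1, by omega⟩
    exact map_be_add_three_eq_one hx (by omega)

lemma map_be_succ (hx : Commute (f (x 0)) (f (x 1))) {i : ℕ} (hi : 2 ≤ i) :
    f (be i (i + 1)) = f (al 1 2) := by
  rw [be_eq_be_mul_al (by omega) (Nat.lt_succ_self i), map_mul, map_be_add_two_eq_one hx hi,
    one_mul, map_al_succ hx (by omega)]

lemma commute_map_x_one_map_be (hx : Commute (f (x 0)) (f (x 1))) :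
    Commute (f (x 1)) (f (be 1 3)) := by
  have h := congrArg f (mk_eq_mk_of_isFbrRel (.relD8 1 2 3 le_rfl one_lt_two (by norm_num)))
  simp only [map_mul, mk_xg, mk_bg, Nat.reduceAdd] at h
  rw [map_be_eq_map_be_add_two hx (i := 1) (j := 4) le_rfl (by norm_num)] at h
  exact h.symm

lemma commute_map_x_zero_map_be (hx : Commute (f (x 0)) (f (x 1))) :
    Commute (f (x 0)) (f (be 1 3)) := by
  have h := congrArg f (mk_eq_mk_of_isFbrRel (.relD7 1 3 le_rfl (by norm_num)))
  simp only [map_mul, mk_xg, mk_bg, Nat.sub_self, Nat.reduceAdd] at h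
  rw [map_be_add_two_eq_one hx (i := 2) le_rfl, mul_one,
    map_be_eq_map_be_add_two hx (i := 1) (j := 4) le_rfl (by norm_num)] at h
  exact h.symm

lemma commute_map_al_map_be (hx : Commute (f (x 0)) (f (x 1))) :
    Commute (f (al 1 2)) (f (be 1 3)) := by
  have h := congrArg f (mk_eq_mk_of_isFbrRel (.relB7 1 2 4 le_rfl one_lt_two (by norm_num)))
  simp only [map_mul, map_inv, mk_ag, mk_bg] at h
  rw [map_be_add_two_eq_one hx (i := 2) le_rfl,
    map_be_eq_map_be_add_two hx (i := 1) (j := 4) le_rfl (by norm_num)] at h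
  simp only [mul_one, mul_inv_cancel_right] at h
  rw [mul_assoc, inv_mul_eq_iff_eq_mul] at h
  exact h.symm

lemma range_le_closure (hx : Commute (f (x 0)) (f (x 1))) :
    f.range ≤ Subgroup.closure {f (x 0), f (x 1), f (al 1 2), f (be 1 3)} := by
  rw [MonoidHom.range_eq_map, ← PresentedGroup.closure_range_of, MonoidHom.map_closure,
    Subgroup.closure_le]
  have mem {g : Fbr} (hg : g = x 0 ∨ g = x 1 ∨ g = al 1 2 ∨ g = be 1 3) :
      f g ∈ Subgroup.closure {f (x 0), f (x 1), f (al 1 2), f (be 1 3)} := by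
    apply Subgroup.subset_closure
    rcases hg with rfl | rfl | rfl | rfl <;> simp
  rintro _ ⟨_, ⟨g, rfl⟩, rfl⟩
  cases g with
  | x m =>
    obtain rfl | hm := Nat.eq_zero_or_pos m
    · exact mem (.inl rfl)
    · exact map_x_eq_map_x_one hx hm ▸ mem (.inr (.inl rfl))
  | a i j hi hij =>
    rw [of_a_eq_al]
    obtain rfl | hij : j = i + 1 ∨ i + 2 ≤ j := by omega
    · exact map_al_succ hx hi ▸ mem (.inr (.inr (.inl rfl)))
    · exact map_al_eq_one hx hi hij ▸ one_mem _
  | b i j hi hij =>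
    rw [of_b_eq_be]
    obtain rfl | hi := hi.eq_or_lt
    · obtain rfl | hj : j = 2 ∨ 3 ≤ j := by omega
      · rw [be_eq_be_mul_al le_rfl one_lt_two, map_mul]
        exact mul_mem (mem (.inr (.inr (.inr rfl)))) (mem (.inr (.inr (.inl rfl))))
      · exact map_be_eq_map_be_add_two hx le_rfl hj ▸ mem (.inr (.inr (.inr rfl)))
    · obtain rfl | hij : j = i + 1 ∨ i + 2 ≤ j := by omega
      · exact map_be_succ hx hi ▸ mem (.inr (.inr (.inl rfl)))
      · rw [map_be_eq_map_be_add_two hx (by omega) hij, map_be_add_two_eq_one hx hi]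
        exact one_mem _

lemma commute_map (hx : Commute (f (x 0)) (f (x 1))) (g h : Fbr) : Commute (f g) (f h) := by
  have l₁ := commute_map_x_zero_map_al hx
  have l₂ := commute_map_x_zero_map_be hx
  have l₃ := (commute_map_al_succ_map_x_one hx le_rfl).symm
  have l₄ := commute_map_x_one_map_be hx
  have l₅ := commute_map_al_map_be hx
  have : IsMulCommutative (Subgroup.closure {f (x 0), f (x 1), f (al 1 2), f (be 1 3)}) := by
    refine Subgroup.isMulCommutative_closure fun p hp q hq => ?_
    simp only [Set.mem_insert_iff, Set.mem_singleton_iff] at hp hq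
    rcases hp with rfl | rfl | rfl | rfl <;> rcases hq with rfl | rfl | rfl | rfl
    exacts [rfl, hx.eq, l₁.eq, l₂.eq, hx.eq.symm, rfl, l₃.eq, l₄.eq, l₁.eq.symm, l₃.eq.symm, rfl,
      l₅.eq, l₂.eq.symm, l₄.eq.symm, l₅.eq.symm, rfl]
  exact setLike_mul_comm (range_le_closure hx ⟨g, rfl⟩) (range_le_closure hx ⟨h, rfl⟩)

end CommutingXZeroXOne

lemma commute_map_x_zero_x_one {G : Type*} [Group G] (hG : ∀ a b c d : G, ⁅⁅a, b⁆, ⁅c, d⁆⁆ = 1)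
    (f : Fbr →* G) : Commute (f (x 0)) (f (x 1)) := by
  have h₃ : (x 0)⁻¹ * ((x 0)⁻¹ * x 1 * x 0) * x 0 = (x 1)⁻¹ * ((x 0)⁻¹ * x 1 * x 0) * x 1 := by
    rw [x_inv_mul_x_mul_x zero_lt_one, x_inv_mul_x_mul_x (i := 0) (by norm_num),
      x_inv_mul_x_mul_x (i := 1) (by norm_num)]
  have h₄ : (x 0)⁻¹ * ((x 0)⁻¹ * ((x 0)⁻¹ * x 1 * x 0) * x 0) * x 0 =
      (x 1)⁻¹ * ((x 0)⁻¹ * ((x 0)⁻¹ * x 1 * x 0) * x 0) * x 1 := by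
    rw [x_inv_mul_x_mul_x zero_lt_one, x_inv_mul_x_mul_x (i := 0) (by norm_num),
      x_inv_mul_x_mul_x (i := 0) (by norm_num), x_inv_mul_x_mul_x (i := 1) (by norm_num)]
  exact commute_of_thompson_relations hG (by simpa using congrArg f h₃)
    (by simpa using congrArg f h₄)

/-- The commutator subgroup `[Fbr, Fbr]` of the braided Thompson group `Fbr` is perfect. -/
theorem fbr_commutator_perfect : commutator ↥(commutator Fbr) = ⊤ := by
  let π := QuotientGroup.mk' ⁅commutator Fbr, commutator Fbr⁆
  have hπ : ∀ g h, Commute (π g) (π h) :=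
    commute_map (commute_map_x_zero_x_one commutatorElement_commutatorElement_eq_one π)
  have hQ : IsMulCommutative (Fbr ⧸ ⁅commutator Fbr, commutator Fbr⁆) := by
    refine isMulCommutative_iff.mpr fun a b => ?_
    obtain ⟨g, rfl⟩ := QuotientGroup.mk'_surjective _ a
    obtain ⟨h, rfl⟩ := QuotientGroup.mk'_surjective _ b
    exact (hπ g h).eq
  refine Group.isPerfect_def.mp (Subgroup.isPerfect_iff.mpr (le_antisymm ?_ ?_))
  · exact Subgroup.commutator_le_left _ _
  · exact Subgroup.Normal.quotient_commutative_iff_commutator_le.mp hQ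

end BrThompson
end
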